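/- arXiv:2405.08009 — 2 statements merged into one kernel-verified Lean document; each statement's English description precedes it below -/
import Mathlib

section
/- Let (G, ‖·‖) be a Banach space, R : G → G satisfying the interpolative Matkowski condition with comparison function ζ, and {p_m} the Picard iteration with p_m ≠ p_{m+1} for all m. Then ‖p_{m+1} − p_m‖ ≤ ζ^m(‖p_1 − p_0‖) for all m ≥ 1, and consequently ‖p_{m+1} − p_m‖ → 0 as m → ∞. -/
/-!
Write `d m = dist (p (m + 1)) (p m)`. Applied to `p m` and `p (m + 1)`, the interpolative condition
loses its term `dist (p (m + 1)) (p (m + 1)) = 0`, and the triangle inequality bounds the remaining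
mixed term by `d m + d (m + 1)`. The exponents are weights summing to one, so the argument of `ζ` is
at most `max (d m) (d (m + 1))`. That maximum cannot be `d (m + 1)` because `ζ t < t` for `t > 0`,
hence `d (m + 1) ≤ ζ (d m)`, and iterating gives `d m ≤ ζ^[m] (d 0) → 0`.
-/

open Filter Set Topology

theorem lt_self_of_tendsto_iterate_zero {ζ : ℝ → ℝ} (hmono : MonotoneOn ζ (Ici 0))
    {t : ℝ} (ht : 0 < t) (hiter : Tendsto (fun n => ζ^[n] t) atTop (𝓝 0)) : ζ t < t := by
  by_contra! hle
  have hbelow : ∀ n, t ≤ ζ^[n] t := by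
    intro n
    induction n with
    | zero => rfl
    | succ n ih =>
      rw [Function.iterate_succ_apply']
      exact hle.trans (hmono ht.le (ht.le.trans ih) ih)
  exact ht.not_ge (ge_of_tendsto hiter (Eventually.of_forall hbelow))

theorem le_iterate_apply_of_le_apply {ζ : ℝ → ℝ} (hmono : MonotoneOn ζ (Ici 0))
    {d : ℕ → ℝ} (hd : ∀ m, 0 ≤ d m) (hstep : ∀ m, d (m + 1) ≤ ζ (d m)) (m : ℕ) :
    d m ≤ ζ^[m] (d 0) := by
  induction m with
  | zero => rfl
  | succ m ih =>
    rw [Function.iterate_succ_apply']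
    exact (hstep m).trans (hmono (hd m) ((hd m).trans ih) ih)

theorem rpow_mul_rpow_mul_rpow_mul_rpow_le {x₁ x₂ x₃ x₄ e₁ e₂ e₃ e₄ M : ℝ}
    (hx₁ : 0 ≤ x₁) (hx₂ : 0 ≤ x₂) (hx₃ : 0 ≤ x₃) (hx₄ : 0 ≤ x₄)
    (hx₁M : x₁ ≤ M) (hx₂M : x₂ ≤ M) (hx₃M : x₃ ≤ M) (hx₄M : x₄ ≤ M)
    (he₁ : 0 ≤ e₁) (he₂ : 0 ≤ e₂) (he₃ : 0 ≤ e₃) (he₄ : 0 ≤ e₄) (he : e₁ + e₂ + e₃ + e₄ = 1) :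
    x₁ ^ e₁ * x₂ ^ e₂ * x₃ ^ e₃ * x₄ ^ e₄ ≤ M :=
  calc x₁ ^ e₁ * x₂ ^ e₂ * x₃ ^ e₃ * x₄ ^ e₄
      ≤ e₁ * x₁ + e₂ * x₂ + e₃ * x₃ + e₄ * x₄ :=
        Real.geom_mean_le_arith_mean4_weighted he₁ he₂ he₃ he₄ hx₁ hx₂ hx₃ hx₄ he
    _ ≤ e₁ * M + e₂ * M + e₃ * M + e₄ * M := by gcongr
    _ = M := by linear_combination M * he

def IsInterpolativeMatkowski {X : Type*} [MetricSpace X] (R : X → X) (a b c : ℝ)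
    (ζ : ℝ → ℝ) : Prop :=
  ∀ p q, R p ≠ p → R q ≠ q →
    dist (R p) (R q) ≤
      ζ (dist p q ^ b * dist p (R p) ^ a * dist q (R q) ^ c *
        ((1 / 2) * (dist p (R q) + dist q (R p))) ^ (1 - a - b - c))

namespace IsInterpolativeMatkowski

variable {X : Type*} [MetricSpace X] {R : X → X} {a b c : ℝ} {ζ : ℝ → ℝ}

theorem dist_apply_apply_le (hR : IsInterpolativeMatkowski R a b c ζ)
    (ha : 0 ≤ a) (hb : 0 ≤ b) (hc : 0 ≤ c) (habc : a + b + c ≤ 1)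
    (hmono : MonotoneOn ζ (Ici 0)) (hlt : ∀ t, 0 < t → ζ t < t)
    {x : X} (hx : R x ≠ x) (hRx : R (R x) ≠ R x) :
    dist (R (R x)) (R x) ≤ ζ (dist (R x) x) := by
  set u := dist (R x) x
  set v := dist (R (R x)) (R x)
  have hu : 0 < u := dist_pos.2 hx
  have hv : 0 < v := dist_pos.2 hRx
  have hmixed : (1 / 2) * dist x (R (R x)) ≤ max u v := by
    have := dist_triangle x (R x) (R (R x))
    rw [dist_comm x (R x), dist_comm (R x) (R (R x))] at this
    linarith [le_max_left u v, le_max_right u v]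
  have hcond := hR x (R x) hx hRx
  rw [dist_self, add_zero, dist_comm x, dist_comm (R x) (R (R x))] at hcond
  have hprod :
      u ^ b * u ^ a * v ^ c * ((1 / 2) * dist x (R (R x))) ^ (1 - a - b - c) ≤ max u v :=
    rpow_mul_rpow_mul_rpow_mul_rpow_le hu.le hu.le hv.le (by positivity)
      (le_max_left u v) (le_max_left u v) (le_max_right u v) hmixed hb ha hc (by linarith)
      (by ring)
  have hvζ : v ≤ ζ (max u v) :=
    hcond.trans (hmono (mem_Ici.2 (by positivity)) (hu.le.trans (le_max_left u v)) hprod)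
  rcases le_total v u with hvu | huv
  · rwa [max_eq_left hvu] at hvζ
  · rw [max_eq_right huv] at hvζ
    exact absurd hvζ (hlt v hv).not_ge

end IsInterpolativeMatkowski

theorem stmt_5_general {G : Type*} [NormedAddCommGroup G]
    (R : G → G) (a b c : ℝ) (ζ : ℝ → ℝ)
    (ha : a ∈ Set.Ioo (0:ℝ) 1) (hb : b ∈ Set.Ioo (0:ℝ) 1) (hc : c ∈ Set.Ioo (0:ℝ) 1)
    (habc : a + b + c < 1)
    (hζmono : ∀ s t : ℝ, 0 ≤ s → s ≤ t → ζ s ≤ ζ t)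
    (hζiter : ∀ t : ℝ, 0 < t → Tendsto (fun n => ζ^[n] t) atTop (nhds 0))
    (hR : ∀ p q : G, R p ≠ p → R q ≠ q →
      ‖R p - R q‖ ≤
        ζ (‖p - q‖ ^ b * ‖p - R p‖ ^ a * ‖q - R q‖ ^ c *
          ((1 / 2) * (‖p - R q‖ + ‖q - R p‖)) ^ (1 - a - b - c)))
    (p : ℕ → G) (hp : ∀ m, p (m + 1) = R (p m))
    (hne : ∀ m, p m ≠ p (m + 1)) :
    (∀ m : ℕ, 1 ≤ m → ‖p (m + 1) - p m‖ ≤ ζ^[m] ‖p 1 - p 0‖) ∧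
      Tendsto (fun m => ‖p (m + 1) - p m‖) atTop (nhds 0) := by
  have hmono : MonotoneOn ζ (Ici 0) := fun s hs _ _ hst => hζmono s _ hs hst
  have hR' : IsInterpolativeMatkowski R a b c ζ := fun p q => by
    simpa only [← dist_eq_norm] using hR p q
  have hmoved (m : ℕ) : R (p m) ≠ p m := hp m ▸ (hne m).symm
  have hstep (m : ℕ) : ‖p (m + 2) - p (m + 1)‖ ≤ ζ ‖p (m + 1) - p m‖ := by
    simpa only [← dist_eq_norm, hp] using
      hR'.dist_apply_apply_le ha.1.le hb.1.le hc.1.le habc.le hmono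
        (fun t ht => lt_self_of_tendsto_iterate_zero hmono ht (hζiter t ht))
        (hmoved m) (hp m ▸ hmoved (m + 1))
  have hbound := le_iterate_apply_of_le_apply hmono (fun m => norm_nonneg (p (m + 1) - p m)) hstep
  refine ⟨fun m _ => hbound m, ?_⟩
  exact squeeze_zero (fun m => norm_nonneg _) hbound
    (hζiter _ (norm_pos_iff.2 (sub_ne_zero.2 (hne 0).symm)))

theorem stmt_5 {G : Type*} [NormedAddCommGroup G] [NormedSpace ℝ G] [CompleteSpace G]
    (R : G → G) (a b c : ℝ) (ζ : ℝ → ℝ)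
    (ha : a ∈ Set.Ioo (0:ℝ) 1) (hb : b ∈ Set.Ioo (0:ℝ) 1) (hc : c ∈ Set.Ioo (0:ℝ) 1)
    (habc : a + b + c < 1)
    (hζnonneg : ∀ t : ℝ, 0 ≤ t → 0 ≤ ζ t)
    (hζmono : ∀ s t : ℝ, 0 ≤ s → s ≤ t → ζ s ≤ ζ t)
    (hζiter : ∀ t : ℝ, 0 < t → Tendsto (fun n => ζ^[n] t) atTop (nhds 0))
    (hR : ∀ p q : G, R p ≠ p → R q ≠ q →
      ‖R p - R q‖ ≤
        ζ (‖p - q‖ ^ b * ‖p - R p‖ ^ a * ‖q - R q‖ ^ c *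
          ((1 / 2) * (‖p - R q‖ + ‖q - R p‖)) ^ (1 - a - b - c)))
    (p : ℕ → G) (hp : ∀ m, p (m + 1) = R (p m))
    (hne : ∀ m, p m ≠ p (m + 1)) :
    (∀ m : ℕ, 1 ≤ m → ‖p (m + 1) - p m‖ ≤ ζ^[m] ‖p 1 - p 0‖) ∧
      Tendsto (fun m => ‖p (m + 1) - p m‖) atTop (nhds 0) :=
  stmt_5_general R a b c ζ ha hb hc habc hζmono hζiter hR p hp hne
end

section
/- With R, S : G → G satisfying the joint enriched interpolative Matkowski condition with parameter k ≥ 0, set λ = 1/(k+1), R_λ = (1−λ)I + λR, S_λ = (1−λ)I + λS. Then for all p ∉ Fix(R_λ), q ∉ Fix(S_λ): ‖R_λ p − S_λ q‖ ≤ λ ζ( (1/λ) ‖p−q‖^b ‖p − R_λ p‖^a ‖q − S_λ q‖^c ((1/2)(‖p − S_λ q‖ + ‖q − R_λ p‖))^{1−a−b−c} ). -/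
/-!
Both the displacement `Rλ p - Sλ q = λ (k (p - q) + R p - S q)` and every norm in the
argument of `ζ` change by the factor `λ = 1/(k+1)` when passing from `R, S` to `Rλ, Sλ`.
The interpolative product is positively homogeneous of degree one, because its exponents
`b, a, c, 1 - a - b - c` sum to `1`, so the factor `1/λ` comes out of the argument of `ζ`.
-/

section Averaged

variable {𝕜 E : Type*} [Field 𝕜] [AddCommGroup E] [Module 𝕜 E]

def averagedMap (lam : 𝕜) (R : E → E) (p : E) : E := (1 - lam) • p + lam • R p

theorem averagedMap_eq_self_iff {lam : 𝕜} (hlam : lam ≠ 0) {R : E → E} {p : E} :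
    averagedMap lam R p = p ↔ R p = p := by
  have : averagedMap lam R p - p = lam • (R p - p) := by unfold averagedMap; module
  rw [← sub_eq_zero, this, smul_eq_zero_iff_right hlam, sub_eq_zero]

variable {k lam : 𝕜} (hklam : (k + 1) * lam = 1) (R S : E → E) (p q : E)
include hklam

theorem smul_sub_averagedMap_self : (k + 1) • (p - averagedMap lam R p) = p - R p := by
  unfold averagedMap
  match_scalars <;> grind

theorem smul_sub_averagedMap :
    (k + 1) • (p - averagedMap lam S q) = (k + 1) • (p - q) + q - S q := by
  unfold averagedMap
  match_scalars <;> grind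

theorem averagedMap_sub_averagedMap :
    averagedMap lam R p - averagedMap lam S q = lam • (k • (p - q) + R p - S q) := by
  unfold averagedMap
  match_scalars <;> grind

end Averaged

theorem mul_rpow_interpolative {μ : ℝ} (hμ : 0 < μ) {A B C D : ℝ} (hA : 0 ≤ A) (hB : 0 ≤ B)
    (hC : 0 ≤ C) (hD : 0 ≤ D) (a b c : ℝ) :
    (μ * A) ^ b * (μ * B) ^ a * (μ * C) ^ c * (μ * D) ^ (1 - a - b - c) =
      μ * (A ^ b * B ^ a * C ^ c * D ^ (1 - a - b - c)) := by
  have hμ_pow : μ ^ b * μ ^ a * μ ^ c * μ ^ (1 - a - b - c) = μ := by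
    rw [← Real.rpow_add hμ, ← Real.rpow_add hμ, ← Real.rpow_add hμ,
      show b + a + c + (1 - a - b - c) = 1 by ring, Real.rpow_one]
  rw [Real.mul_rpow hμ.le hA, Real.mul_rpow hμ.le hB, Real.mul_rpow hμ.le hC,
    Real.mul_rpow hμ.le hD]
  linear_combination (A ^ b * B ^ a * C ^ c * D ^ (1 - a - b - c)) * hμ_pow

theorem stmt_13_general {G : Type*} [NormedAddCommGroup G] [NormedSpace ℝ G]
    (R S : G → G) (a b c k : ℝ) (ζ : ℝ → ℝ)
    (hk : 0 ≤ k)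
    (hRS : ∀ p q : G, R p ≠ p → S q ≠ q →
      ‖k • (p - q) + R p - S q‖ ≤
        ζ (‖(k + 1) • (p - q)‖ ^ b * ‖p - R p‖ ^ a * ‖q - S q‖ ^ c *
          ((1 / 2) * (‖(k + 1) • (p - q) + q - S q‖ + ‖(k + 1) • (q - p) + p - R p‖)) ^
            (1 - a - b - c)))
    (lam : ℝ) (hlam : lam = 1 / (k + 1))
    (Rl Sl : G → G)
    (hRl : ∀ p, Rl p = (1 - lam) • p + lam • R p)
    (hSl : ∀ p, Sl p = (1 - lam) • p + lam • S p) :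
    ∀ p q : G, Rl p ≠ p → Sl q ≠ q →
      ‖Rl p - Sl q‖ ≤
        lam * ζ ((1 / lam) * (‖p - q‖ ^ b * ‖p - Rl p‖ ^ a * ‖q - Sl q‖ ^ c *
          ((1 / 2) * (‖p - Sl q‖ + ‖q - Rl p‖)) ^ (1 - a - b - c))) := by
  intro p q hRp hSq
  obtain rfl : Rl = averagedMap lam R := funext hRl
  obtain rfl : Sl = averagedMap lam S := funext hSl
  have hk1 : 0 < k + 1 := by linarith
  have hlam_pos : 0 < lam := by rw [hlam]; positivity
  have hklam : (k + 1) * lam = 1 := by rw [hlam]; field_simp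
  have hinv : 1 / lam = k + 1 := by rw [hlam, one_div_one_div]
  rw [Ne, averagedMap_eq_self_iff hlam_pos.ne'] at hRp hSq
  have key := hRS p q hRp hSq
  rw [← smul_sub_averagedMap hklam S p q, ← smul_sub_averagedMap hklam R q p,
    ← smul_sub_averagedMap_self hklam R p, ← smul_sub_averagedMap_self hklam S q] at key
  simp only [norm_smul_of_nonneg hk1.le, ← mul_add, mul_left_comm (1 / 2 : ℝ) (k + 1)] at key
  rw [mul_rpow_interpolative hk1 (norm_nonneg _) (norm_nonneg _) (norm_nonneg _)
    (by positivity)] at key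
  rw [averagedMap_sub_averagedMap hklam, norm_smul_of_nonneg hlam_pos.le, hinv]
  exact mul_le_mul_of_nonneg_left key hlam_pos.le

theorem stmt_13 {G : Type*} [NormedAddCommGroup G] [NormedSpace ℝ G]
    (R S : G → G) (a b c k : ℝ) (ζ : ℝ → ℝ)
    (ha : a ∈ Set.Ioo (0:ℝ) 1) (hb : b ∈ Set.Ioo (0:ℝ) 1) (hc : c ∈ Set.Ioo (0:ℝ) 1)
    (habc : a + b + c < 1) (hk : 0 ≤ k)
    (hζnonneg : ∀ t : ℝ, 0 ≤ t → 0 ≤ ζ t)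
    (hζmono : ∀ s t : ℝ, 0 ≤ s → s ≤ t → ζ s ≤ ζ t)
    (hζiter : ∀ t : ℝ, 0 < t → Filter.Tendsto (fun n => ζ^[n] t) Filter.atTop (nhds 0))
    (hRS : ∀ p q : G, R p ≠ p → S q ≠ q →
      ‖k • (p - q) + R p - S q‖ ≤
        ζ (‖(k + 1) • (p - q)‖ ^ b * ‖p - R p‖ ^ a * ‖q - S q‖ ^ c *
          ((1 / 2) * (‖(k + 1) • (p - q) + q - S q‖ + ‖(k + 1) • (q - p) + p - R p‖)) ^
            (1 - a - b - c)))
    (lam : ℝ) (hlam : lam = 1 / (k + 1))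
    (Rl Sl : G → G)
    (hRl : ∀ p, Rl p = (1 - lam) • p + lam • R p)
    (hSl : ∀ p, Sl p = (1 - lam) • p + lam • S p) :
    ∀ p q : G, Rl p ≠ p → Sl q ≠ q →
      ‖Rl p - Sl q‖ ≤
        lam * ζ ((1 / lam) * (‖p - q‖ ^ b * ‖p - Rl p‖ ^ a * ‖q - Sl q‖ ^ c *
          ((1 / 2) * (‖p - Sl q‖ + ‖q - Rl p‖)) ^ (1 - a - b - c))) :=
  stmt_13_general R S a b c k ζ hk hRS lam hlam Rl Sl hRl hSl
end
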